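/- If K and L are monomial ideals of Borel type in S = k[x_1,...,x_n], then K ∩ L, K + L, and K·L are all monomial ideals of Borel type. -/

import Mathlib

open MvPolynomial DirectSum

noncomputable section




variable {k : Type} [Field k] {n : ℕ}

/-- The maximal graded ideal `(x_1, …, x_n)` of `k[x_1,…,x_n]`. -/
def maxIdeal (k : Type) [Field k] (n : ℕ) : Ideal (MvPolynomial (Fin n) k) :=
  Ideal.span (Set.range X)

/-- The "infinite colon" `I : J^∞ = ⋃_t (I : J^t)`. -/
def infColon (I J : Ideal (MvPolynomial (Fin n) k)) : Ideal (MvPolynomial (Fin n) k) :=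
  ⨆ t : ℕ, Submodule.colon I ((J ^ t : Ideal (MvPolynomial (Fin n) k)) : Set (MvPolynomial (Fin n) k))

/-- The saturation `I^{sat} = I : m^∞`. -/
def satur (I : Ideal (MvPolynomial (Fin n) k)) : Ideal (MvPolynomial (Fin n) k) :=
  infColon I (maxIdeal k n)

/-- A monomial ideal: an ideal generated by monomials. -/
def IsMonomialIdeal (I : Ideal (MvPolynomial (Fin n) k)) : Prop :=
  ∃ A : Set (Fin n →₀ ℕ), I = Ideal.span ((fun u => monomial u (1 : k)) '' A)

/-- `I` is of Borel type: `I : (x_1,…,x_i)^∞ = I : x_i^∞` for all `i`. -/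
def IsBorelType (I : Ideal (MvPolynomial (Fin n) k)) : Prop :=
  ∀ i : Fin n,
    infColon I (Ideal.span {f | ∃ j ≤ i, f = X j}) = infColon I (Ideal.span {X i})

/-- Total degree of an exponent vector. -/
def expDeg (u : Fin n →₀ ℕ) : ℕ := u.sum fun _ e => e

/-- The truncated ideal `I_{≥ e}`, generated by all monomials of degree `≥ e` lying in `I`. -/
def truncGE (I : Ideal (MvPolynomial (Fin n) k)) (e : ℕ) : Ideal (MvPolynomial (Fin n) k) :=
  Ideal.span {f | ∃ u : Fin n →₀ ℕ, monomial u (1 : k) ∈ I ∧ e ≤ expDeg u ∧ f = monomial u (1 : k)}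

/-- A stable monomial ideal: for every monomial `x^u ∈ I` with largest variable `x_j`
dividing it and every `i < j`, also `x_i x^u / x_j ∈ I`. -/
def IsStable (I : Ideal (MvPolynomial (Fin n) k)) : Prop :=
  ∀ u : Fin n →₀ ℕ, monomial u (1 : k) ∈ I →
    ∀ j : Fin n, j ∈ u.support → (∀ l ∈ u.support, l ≤ j) →
      ∀ i : Fin n, i < j →
        monomial (u - Finsupp.single j 1 + Finsupp.single i 1) (1 : k) ∈ I

/-- The set of (exponent vectors of) minimal monomial generators of a monomial ideal. -/
def minGens (I : Ideal (MvPolynomial (Fin n) k)) : Set (Fin n →₀ ℕ) :=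
  {u | monomial u (1 : k) ∈ I ∧ ∀ v : Fin n →₀ ℕ, monomial v (1 : k) ∈ I → v ≤ u → v = u}

/-- The irreducible monomial ideal `m^b = (x_i^{b_i} : b_i ≥ 1)`. -/
def irredPow (k : Type) [Field k] {n : ℕ} (b : Fin n →₀ ℕ) : Ideal (MvPolynomial (Fin n) k) :=
  Ideal.span {f | ∃ i : Fin n, 1 ≤ b i ∧ f = (X i : MvPolynomial (Fin n) k) ^ b i}





/-- The product of the variables indexed by `F`. -/
def varProd (k : Type) [Field k] {n : ℕ} (F : Finset (Fin n)) : MvPolynomial (Fin n) k :=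
  ∏ i ∈ F, X i

variable (M : Type) [AddCommGroup M] [Module (MvPolynomial (Fin n) k) M]

variable (k) in
/-- The localization of `M` at the product of the variables indexed by `F`. -/
abbrev locAt' (F : Finset (Fin n)) : Type :=
  LocalizedModule (Submonoid.powers (varProd k F)) M

variable (k n) in
/-- The `p`-th term of the Čech complex. -/
abbrev cechC (p : ℕ) : Type :=
  DirectSum {F : Finset (Fin n) // F.card = p} (fun F => locAt' k M F.1)

lemma commute_aux {A : Type} [Ring A] {a b : A} (h : Commute a b) (hu : IsUnit (a * b)) :
    IsUnit a := by
  refine isUnit_iff_exists.mpr ⟨b * ↑hu.unit⁻¹, ?_, ?_⟩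
  · rw [← mul_assoc]
    simpa using hu.unit.mul_inv
  · have hc : Commute a (↑hu.unit : A) := by
      have : (↑hu.unit : A) = a * b := hu.unit_spec
      rw [this]
      exact (Commute.refl a).mul_right h
    have hc' : Commute a (↑hu.unit⁻¹ : A) := hc.units_inv_right
    calc b * ↑hu.unit⁻¹ * a = b * (a * ↑hu.unit⁻¹) := by rw [mul_assoc, hc'.eq]
    _ = (a * b) * ↑hu.unit⁻¹ := by rw [← mul_assoc]; exact congrArg (· * _) h.eq.symm
    _ = 1 := by simpa using hu.unit.mul_inv

lemma isUnit_algebraMap_end (u v w : MvPolynomial (Fin n) k) (hw : w = u * v)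
    (s : Submonoid.powers u) :
    IsUnit ((algebraMap (MvPolynomial (Fin n) k)
      (Module.End (MvPolynomial (Fin n) k)
        (LocalizedModule (Submonoid.powers w) M))) s) := by
  subst hw
  obtain ⟨t, ht⟩ := s.2
  have h1 : IsUnit ((algebraMap (MvPolynomial (Fin n) k)
      (Module.End (MvPolynomial (Fin n) k)
        (LocalizedModule (Submonoid.powers (u * v)) M))) ((u * v) ^ t)) :=
    IsLocalizedModule.map_units
      (LocalizedModule.mkLinearMap (Submonoid.powers (u * v)) M)
      (⟨(u * v) ^ t, ⟨t, rfl⟩⟩ : Submonoid.powers (u * v))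
  have h2 : (u * v) ^ t = (s : MvPolynomial (Fin n) k) * v ^ t := by
    rw [mul_pow]; simp only [ht]
  rw [h2, map_mul] at h1
  exact commute_aux ((Commute.all _ _).map _) h1

/-- The canonical map between localizations of `M` for `F ⊆ G`. -/
def locMap (F G : Finset (Fin n)) (h : F ⊆ G) :
    locAt' k M F →ₗ[MvPolynomial (Fin n) k] locAt' k M G := by
  refine LocalizedModule.lift _
    (LocalizedModule.mkLinearMap (Submonoid.powers (varProd k G)) M) ?_
  intro s
  have hFG : varProd k G = varProd k F * varProd k (G \ F) := by
    rw [varProd, varProd, varProd, ← Finset.prod_sdiff h, mul_comm]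
  exact isUnit_algebraMap_end M _ _ _ hFG s

set_option maxHeartbeats 1000000 in
variable (k n) in
/-- The Čech differential. -/
def cechD (p : ℕ) : cechC k n M p →ₗ[MvPolynomial (Fin n) k] cechC k n M (p + 1) :=
  DirectSum.toModule (MvPolynomial (Fin n) k) _ (cechC k n M (p + 1)) (fun F =>
    ∑ j : Fin n,
      if h : j ∈ F.1 then 0 else
        ((-1 : ℤ) ^ ((F.1.filter (· < j)).card)) •
          ((DirectSum.lof (MvPolynomial (Fin n) k) {G : Finset (Fin n) // G.card = p + 1}
              (fun G => locAt' k M G.1)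
              ⟨insert j F.1, by rw [Finset.card_insert_of_notMem h, F.2]⟩).comp
            (locMap M F.1 (insert j F.1) (Finset.subset_insert _ _))))


variable (k n) in
/-- The cocycles at Čech degree `p`, as an additive subgroup. -/
def cechZ (p : ℕ) : AddSubgroup (cechC k n M p) :=
  AddMonoidHom.ker (cechD k n M p).toAddMonoidHom

variable (k n) in
/-- The coboundaries at Čech degree `p`, as an additive subgroup. -/
def cechB (p : ℕ) : AddSubgroup (cechC k n M p) :=
  Nat.casesOn (motive := fun p => AddSubgroup (cechC k n M p)) p ⊥
    (fun q => AddMonoidHom.range (G := cechC k n M q) (N := cechC k n M (q + 1))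
      ((cechD k n M q).toAddMonoidHom))

variable (k n) in
/-- The `p`-th (Čech) local cohomology of `M` with respect to the maximal graded
ideal: cocycles modulo coboundaries. -/
abbrev cechH (p : ℕ) : Type :=
  (cechZ k n M p) ⧸ ((cechB k n M p).addSubgroupOf (cechZ k n M p))

variable (dg : ℤ → AddSubgroup M)

/-- The degree-`j` part of the localization of `M` at `x_F`, induced by a grading `dg`
of `M`: it is generated by the fractions `m / x_F^t` with `m` homogeneous of degree
`j + t·|F|`. -/
def locDeg (F : Finset (Fin n)) (j : ℤ) : AddSubgroup (locAt' k M F) :=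
  AddSubgroup.closure
    {z | ∃ (t : ℕ) (m : M), m ∈ dg (j + t * F.card) ∧
      z = LocalizedModule.mk m (⟨varProd k F ^ t, ⟨t, rfl⟩⟩ : Submonoid.powers (varProd k F))}

variable (k n) in
/-- The degree-`j` part of the `p`-th Čech term. -/
def cechDeg (p : ℕ) (j : ℤ) : AddSubgroup (cechC k n M p) where
  carrier := {x | ∀ F, x F ∈ locDeg M dg F.1 j}
  zero_mem' := by intro F; rw [DirectSum.zero_apply]; exact zero_mem _
  add_mem' := by intro a b ha hb F; rw [DirectSum.add_apply]; exact add_mem (ha F) (hb F)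
  neg_mem' := by intro a ha F; rw [DFinsupp.neg_apply]; exact neg_mem (ha F)

variable (k n) in
/-- The degree-`j` part of the `p`-th local cohomology of `M`. -/
def cechHdeg (p : ℕ) (j : ℤ) : AddSubgroup (cechH k n M p) :=
  AddSubgroup.map (QuotientAddGroup.mk' ((cechB k n M p).addSubgroupOf (cechZ k n M p)))
    ((cechDeg k n M dg p j).comap (cechZ k n M p).subtype)

variable (k n) in
/-- `a_i(M) = max{ j : H_m^i(M)_j ≠ 0 }`, as an extended real (`⊥ = -∞` if the
local cohomology vanishes). -/
def aInv (i : ℕ) : EReal :=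
  sSup {x : EReal | ∃ j : ℤ, cechHdeg k n M dg i j ≠ ⊥ ∧ x = ((j : ℝ) : EReal)}

variable (k n) in
/-- The partial regularity `reg_t(M) = max{ a_i(M) + i : i ≤ t }`. -/
def regT (t : ℕ) : EReal :=
  sSup {x : EReal | ∃ i ≤ t, x = aInv k n M dg i + ((i : ℝ) : EReal)}

variable (k n) in
/-- `a*_t(M) = max{ a_i(M) : i ≤ t }`. -/
def aStarT (t : ℕ) : EReal :=
  sSup {x : EReal | ∃ i ≤ t, x = aInv k n M dg i}

variable (k n) in
/-- The Castelnuovo–Mumford regularity `reg M = max_i { a_i(M) + i }`. -/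
def cmReg : EReal :=
  sSup {x : EReal | ∃ i : ℕ, x = aInv k n M dg i + ((i : ℝ) : EReal)}

variable (k n) in
/-- The `a^*`-invariant `a^*(M) = max_i a_i(M)`. -/
def aStar : EReal :=
  sSup {x : EReal | ∃ i : ℕ, x = aInv k n M dg i}

/-- The canonical grading of a quotient `S/I` by a homogeneous ideal. -/
def quotDeg (I : Ideal (MvPolynomial (Fin n) k)) (j : ℤ) :
    AddSubgroup ((MvPolynomial (Fin n) k) ⧸ I) :=
  if 0 ≤ j then
    AddSubgroup.map (Ideal.Quotient.mk I).toAddMonoidHom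
      ((homogeneousSubmodule (Fin n) k j.toNat).toAddSubgroup)
  else ⊥

/-- The canonical grading of a homogeneous ideal `I ⊆ S`, viewed as an `S`-module. -/
def idealDeg (I : Ideal (MvPolynomial (Fin n) k)) (j : ℤ) : AddSubgroup I :=
  if 0 ≤ j then
    AddSubgroup.comap (Submodule.subtype I).toAddMonoidHom
      ((homogeneousSubmodule (Fin n) k j.toNat).toAddSubgroup)
  else ⊥

variable (k n) in
/-- `a_i(S/I)` for a homogeneous ideal `I`. -/
def aQuot (I : Ideal (MvPolynomial (Fin n) k)) (i : ℕ) : EReal :=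
  aInv k n ((MvPolynomial (Fin n) k) ⧸ I) (quotDeg I) i

variable (k n) in
/-- `a_i(I)` for a homogeneous ideal `I` viewed as a graded `S`-module. -/
def aIdealMod (I : Ideal (MvPolynomial (Fin n) k)) (i : ℕ) : EReal :=
  aInv k n I (idealDeg I) i


variable (k n) in
/-- `reg_t(S/I)` for a homogeneous ideal `I`. -/
def regTQuot (I : Ideal (MvPolynomial (Fin n) k)) (t : ℕ) : EReal :=
  regT k n ((MvPolynomial (Fin n) k) ⧸ I) (quotDeg I) t

variable (k n) in
/-- `a*_t(S/I)` for a homogeneous ideal `I`. -/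
def aStarTQuot (I : Ideal (MvPolynomial (Fin n) k)) (t : ℕ) : EReal :=
  aStarT k n ((MvPolynomial (Fin n) k) ⧸ I) (quotDeg I) t

variable (k n) in
/-- `reg(S/I)` for a homogeneous ideal `I`. -/
def cmRegQuot (I : Ideal (MvPolynomial (Fin n) k)) : EReal :=
  cmReg k n ((MvPolynomial (Fin n) k) ⧸ I) (quotDeg I)

variable (k n) in
/-- `a^*(S/I)` for a homogeneous ideal `I`. -/
def aStarQuot (I : Ideal (MvPolynomial (Fin n) k)) : EReal :=
  aStar k n ((MvPolynomial (Fin n) k) ⧸ I) (quotDeg I)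

variable (k n) in
/-- `reg_t(I)` for a homogeneous ideal `I` viewed as a graded module. -/
def regTIdeal (I : Ideal (MvPolynomial (Fin n) k)) (t : ℕ) : EReal :=
  regT k n I (idealDeg I) t

variable (k n) in
/-- `a*_t(I)` for a homogeneous ideal `I` viewed as a graded module. -/
def aStarTIdeal (I : Ideal (MvPolynomial (Fin n) k)) (t : ℕ) : EReal :=
  aStarT k n I (idealDeg I) t

variable (k n) in
/-- `reg(I)`, the Castelnuovo–Mumford regularity of the ideal `I` as a graded module. -/
def cmRegIdeal (I : Ideal (MvPolynomial (Fin n) k)) : EReal :=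
  cmReg k n I (idealDeg I)

variable (k n) in
/-- The depth of a module: the maximal length of a regular sequence contained in the
maximal graded ideal. -/
def moduleDepth (N : Type) [AddCommGroup N] [Module (MvPolynomial (Fin n) k) N] : ℕ :=
  sSup {d : ℕ | ∃ rs : List (MvPolynomial (Fin n) k), rs.length = d ∧
    (∀ r ∈ rs, r ∈ maxIdeal k n) ∧ RingTheory.Sequence.IsRegular N rs}

variable (k n) in
/-- The (Krull) dimension of a module, i.e. of `S` modulo its annihilator. -/
def moduleDim (N : Type) [AddCommGroup N] [Module (MvPolynomial (Fin n) k) N] :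
    WithBot ℕ∞ :=
  ringKrullDim ((MvPolynomial (Fin n) k) ⧸ Module.annihilator (MvPolynomial (Fin n) k) N)

variable (k n) in
/-- A Cohen–Macaulay module: zero, or of depth equal to its dimension. -/
def IsCMmod (N : Type) [AddCommGroup N] [Module (MvPolynomial (Fin n) k) N] : Prop :=
  Subsingleton N ∨ ((moduleDepth k n N : ℕ∞) : WithBot ℕ∞) = moduleDim k n N

/-- The satiety `s(I^{sat}/I)`: the largest degree `j` with `(I^{sat}/I)_j ≠ 0`,
i.e. with `(I^{sat})_j ⊄ I_j`, as an extended real. -/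
def satietyDeg {k : Type} [Field k] {n : ℕ} (I : Ideal (MvPolynomial (Fin n) k)) : EReal :=
  sSup {x : EReal | ∃ j : ℕ,
    (∃ f ∈ homogeneousSubmodule (Fin n) k j, f ∈ satur I ∧ f ∉ I) ∧ x = ((j : ℝ) : EReal)}

/-- Maximal degree of a minimal monomial generator. -/
def genDeg {k : Type} [Field k] {n : ℕ} (I : Ideal (MvPolynomial (Fin n) k)) : ℕ :=
  sSup {d : ℕ | ∃ u ∈ minGens I, expDeg u = d}

/-- `m(u)`: the (1-based) largest index of a variable dividing the monomial `x^u`. -/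
def mVal {n : ℕ} (u : Fin n →₀ ℕ) : ℕ :=
  u.support.sup (fun i => (i : ℕ) + 1)

variable (k n) in
/-- The degree-`t` part of a graded free module `⊕_j S(-d_j)`, realized as
`Fin r →₀ S`: the `j`-th coordinate must be homogeneous of degree `t - d j`. -/
def freeDeg (r : ℕ) (d : Fin r → ℤ) (t : ℤ) :
    AddSubgroup (Fin r →₀ MvPolynomial (Fin n) k) where
  carrier := {f | ∀ j : Fin r,
    (0 ≤ t - d j → f j ∈ homogeneousSubmodule (Fin n) k (t - d j).toNat) ∧
    (t - d j < 0 → f j = 0)}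
  zero_mem' := by
    intro j
    exact ⟨fun _ => by simp, fun _ => by simp⟩
  add_mem' := by
    intro a b ha hb j
    refine ⟨fun h => ?_, fun h => ?_⟩
    · simpa [Finsupp.add_apply] using add_mem ((ha j).1 h) ((hb j).1 h)
    · simp [Finsupp.add_apply, (ha j).2 h, (hb j).2 h]
  neg_mem' := by
    intro a ha j
    refine ⟨fun h => ?_, fun h => ?_⟩
    · simpa [Finsupp.neg_apply] using neg_mem ((ha j).1 h)
    · simp [Finsupp.neg_apply, (ha j).2 h]

/-- A minimal graded free resolution
`0 → F_s → ⋯ → F_1 → F_0 → M → 0` of a graded module `M` (with grading `dg`),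
where `F_i` is free with `rk i` generators of degrees `dgen i j`. -/
structure MinimalGradedFreeRes (dg : ℤ → AddSubgroup M) where
  /-- length of the resolution -/
  s : ℕ
  /-- ranks of the free modules -/
  rk : ℕ → ℕ
  /-- degrees of the generators -/
  dgen : (i : ℕ) → Fin (rk i) → ℤ
  /-- the differentials `F_{i+1} → F_i` -/
  φ : (i : ℕ) → (Fin (rk (i + 1)) →₀ MvPolynomial (Fin n) k) →ₗ[MvPolynomial (Fin n) k]
      (Fin (rk i) →₀ MvPolynomial (Fin n) k)
  /-- the augmentation `F_0 → M` -/
  ε : (Fin (rk 0) →₀ MvPolynomial (Fin n) k) →ₗ[MvPolynomial (Fin n) k] M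
  rk_eq_zero : ∀ i, s < i → rk i = 0
  ε_surj : Function.Surjective ε
  ε_graded : ∀ (t : ℤ) x, x ∈ freeDeg k n (rk 0) (dgen 0) t → ε x ∈ dg t
  φ_graded : ∀ (i : ℕ) (t : ℤ) x, x ∈ freeDeg k n (rk (i + 1)) (dgen (i + 1)) t →
    φ i x ∈ freeDeg k n (rk i) (dgen i) t
  exact_aug : LinearMap.ker ε = LinearMap.range (φ 0)
  exact_mid : ∀ i : ℕ, LinearMap.ker (φ i) = LinearMap.range (φ (i + 1))
  minimal : ∀ (i : ℕ) x (j : Fin (rk i)), (φ i x) j ∈ maxIdeal k n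



/-!
For any ideals, `(K ∩ L) : J^∞ = (K : J^∞) ∩ (L : J^∞)`, so Borel type passes to `K ∩ L`.
If `I` is generated by the monomials `x^a`, `a ∈ A`, then `I : x_i^∞` is generated by the
`x^a` with the exponent of `x_i` erased. Erasing is additive, so for monomial ideals
`x_i`-saturation commutes with sums and products, whence
`(K + L) : x_i^∞ = K : Q_i^∞ + L : Q_i^∞ ⊆ (K + L) : Q_i^∞` with `Q_i = (x_1, …, x_i)`, and
likewise for `K L`; the reverse inclusion always holds because `x_i ∈ Q_i`.
-/

section MonomialSpan

variable {σ R : Type*} [CommSemiring R]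

variable (R) in
def monomialSpan (A : Set (σ →₀ ℕ)) : Ideal (MvPolynomial σ R) :=
  Ideal.span ((fun u => monomial u (1 : R)) '' A)

theorem mem_monomialSpan {A : Set (σ →₀ ℕ)} {f : MvPolynomial σ R} :
    f ∈ monomialSpan R A ↔ ∀ m ∈ f.support, ∃ a ∈ A, a ≤ m :=
  mem_ideal_span_monomial_image

theorem monomialSpan_union (A B : Set (σ →₀ ℕ)) :
    monomialSpan R (A ∪ B) = monomialSpan R A ⊔ monomialSpan R B := by
  rw [monomialSpan, Set.image_union, Ideal.span_union]
  rfl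

open Pointwise in
theorem monomialSpan_add (A B : Set (σ →₀ ℕ)) :
    monomialSpan R (A + B) = monomialSpan R A * monomialSpan R B := by
  have hmul (a b : σ →₀ ℕ) : monomial (a + b) (1 : R) = monomial a 1 * monomial b 1 := by
    rw [monomial_mul, one_mul]
  rw [monomialSpan, monomialSpan, monomialSpan, Ideal.span_mul_span', ← Set.image2_add,
    ← Set.image2_mul]
  exact congrArg Ideal.span (Set.image_image2_distrib hmul)

-- `a ⊔ b` is the exponent of `lcm (x^a, x^b)`.
theorem monomialSpan_inf (A B : Set (σ →₀ ℕ)) :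
    monomialSpan R A ⊓ monomialSpan R B = monomialSpan R (Set.image2 (· ⊔ ·) A B) := by
  ext f
  simp only [Submodule.mem_inf, mem_monomialSpan, Set.exists_mem_image2, sup_le_iff]
  constructor
  · rintro ⟨hA, hB⟩ m hm
    obtain ⟨a, ha, ham⟩ := hA m hm
    obtain ⟨b, hb, hbm⟩ := hB m hm
    exact ⟨a, ha, b, hb, ham, hbm⟩
  · intro h
    refine ⟨fun m hm => ?_, fun m hm => ?_⟩
    · obtain ⟨a, ha, -, -, ham, -⟩ := h m hm
      exact ⟨a, ha, ham⟩
    · obtain ⟨-, -, b, hb, -, hbm⟩ := h m hm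
      exact ⟨b, hb, hbm⟩

end MonomialSpan

theorem mem_infColon {I J : Ideal (MvPolynomial (Fin n) k)} {f : MvPolynomial (Fin n) k} :
    f ∈ infColon I J ↔ ∃ t : ℕ, f ∈ I.colon ((J ^ t : Ideal (MvPolynomial (Fin n) k)) : Set _) :=
  Submodule.mem_iSup_of_directed _ <| Monotone.directed_le fun _ _ hst =>
    Submodule.colon_mono le_rfl (Ideal.pow_le_pow_right hst)

theorem mem_infColon_span_singleton {I : Ideal (MvPolynomial (Fin n) k)}
    {g f : MvPolynomial (Fin n) k} :
    f ∈ infColon I (Ideal.span {g}) ↔ ∃ t : ℕ, g ^ t * f ∈ I := by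
  simp only [mem_infColon, Ideal.span_singleton_pow, Ideal.mem_colon_span_singleton, mul_comm]

theorem infColon_mono_left {I I' : Ideal (MvPolynomial (Fin n) k)} (h : I ≤ I')
    (J : Ideal (MvPolynomial (Fin n) k)) : infColon I J ≤ infColon I' J :=
  iSup_mono fun _ => Submodule.colon_mono h le_rfl

theorem infColon_anti_right (I : Ideal (MvPolynomial (Fin n) k))
    {J J' : Ideal (MvPolynomial (Fin n) k)} (h : J ≤ J') : infColon I J' ≤ infColon I J :=
  iSup_mono fun t => Submodule.colon_mono le_rfl (Ideal.pow_right_mono h t)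

theorem infColon_inf (I I' J : Ideal (MvPolynomial (Fin n) k)) :
    infColon (I ⊓ I') J = infColon I J ⊓ infColon I' J := by
  refine le_antisymm (le_inf (infColon_mono_left inf_le_left J)
    (infColon_mono_left inf_le_right J)) fun f ⟨hI, hI'⟩ => ?_
  obtain ⟨s, hs⟩ := mem_infColon.1 hI
  obtain ⟨t, ht⟩ := mem_infColon.1 hI'
  refine mem_infColon.2 ⟨s + t, ?_⟩
  rw [Submodule.inf_colon]
  constructor
  · exact Submodule.colon_mono le_rfl (Ideal.pow_le_pow_right (Nat.le_add_right s t)) hs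
  · exact Submodule.colon_mono le_rfl (Ideal.pow_le_pow_right (Nat.le_add_left t s)) ht

theorem sup_infColon_le (I I' J : Ideal (MvPolynomial (Fin n) k)) :
    infColon I J ⊔ infColon I' J ≤ infColon (I ⊔ I') J :=
  sup_le (infColon_mono_left le_sup_left J) (infColon_mono_left le_sup_right J)

theorem mul_infColon_le (I I' J : Ideal (MvPolynomial (Fin n) k)) :
    infColon I J * infColon I' J ≤ infColon (I * I') J := by
  refine Ideal.mul_le.2 fun a ha b hb => ?_
  obtain ⟨s, hs⟩ := mem_infColon.1 ha
  obtain ⟨t, ht⟩ := mem_infColon.1 hb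
  have hst : J ^ s * J ^ t ≤ (I * I').colon {a * b} := Ideal.mul_le.2 fun g hg h hh => by
    rw [Submodule.mem_colon_singleton, smul_eq_mul, mul_mul_mul_comm, mul_comm g, mul_comm h]
    exact Ideal.mul_mem_mul (Submodule.mem_colon.1 hs g hg) (Submodule.mem_colon.1 ht h hh)
  refine mem_infColon.2 ⟨s + t, Submodule.mem_colon.2 fun p hp => ?_⟩
  rw [smul_eq_mul, mul_comm (a * b) p]
  exact Submodule.mem_colon_singleton.1 (hst (pow_add J s t ▸ hp))

theorem infColon_monomialSpan_span_X (A : Set (Fin n →₀ ℕ)) (i : Fin n) :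
    infColon (monomialSpan k A) (Ideal.span {X i}) = monomialSpan k (Finsupp.erase i '' A) := by
  refine le_antisymm (fun f hf => ?_) ?_
  · obtain ⟨t, ht⟩ := mem_infColon_span_singleton.1 hf
    refine mem_monomialSpan.2 fun m hm => ?_
    have hshift : Finsupp.single i t + m ∈ (X i ^ t * f).support := by
      rw [mem_support_iff, X_pow_eq_monomial, coeff_monomial_mul, one_mul]
      exact mem_support_iff.1 hm
    obtain ⟨a, ha, ham⟩ := mem_monomialSpan.1 ht _ hshift
    refine ⟨a.erase i, Set.mem_image_of_mem _ ha, fun j => ?_⟩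
    rcases eq_or_ne j i with rfl | hj
    · simp
    · simpa [Finsupp.erase_ne hj, Finsupp.single_eq_of_ne hj] using ham j
  · rw [monomialSpan, Ideal.span_le]
    rintro _ ⟨_, ⟨a, ha, rfl⟩, rfl⟩
    refine mem_infColon_span_singleton.2 ⟨a i, ?_⟩
    rw [X_pow_eq_monomial, monomial_mul, one_mul, Finsupp.single_add_erase]
    exact Ideal.subset_span ⟨a, ha, rfl⟩

theorem isBorelType_iff_le {I : Ideal (MvPolynomial (Fin n) k)} :
    IsBorelType I ↔ ∀ i : Fin n, infColon I (Ideal.span {X i}) ≤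
      infColon I (Ideal.span {f | ∃ j ≤ i, f = X j}) := by
  refine forall_congr' fun i => ⟨fun h => h.ge, fun h => le_antisymm ?_ h⟩
  exact infColon_anti_right I (Ideal.span_mono (Set.singleton_subset_iff.2 ⟨i, le_rfl, rfl⟩))

theorem IsBorelType.inf {I I' : Ideal (MvPolynomial (Fin n) k)} (hI : IsBorelType I)
    (hI' : IsBorelType I') : IsBorelType (I ⊓ I') := fun i => by
  rw [infColon_inf, infColon_inf, hI i, hI' i]

section BorelType

variable {A B : Set (Fin n →₀ ℕ)}

theorem infColon_sup_monomialSpan_span_X (i : Fin n) :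
    infColon (monomialSpan k A ⊔ monomialSpan k B) (Ideal.span {X i}) =
      infColon (monomialSpan k A) (Ideal.span {X i}) ⊔
        infColon (monomialSpan k B) (Ideal.span {X i}) := by
  simp only [← monomialSpan_union, infColon_monomialSpan_span_X, Set.image_union]

open Pointwise in
theorem infColon_mul_monomialSpan_span_X (i : Fin n) :
    infColon (monomialSpan k A * monomialSpan k B) (Ideal.span {X i}) =
      infColon (monomialSpan k A) (Ideal.span {X i}) *
        infColon (monomialSpan k B) (Ideal.span {X i}) := by
  rw [← monomialSpan_add, infColon_monomialSpan_span_X, infColon_monomialSpan_span_X,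
    infColon_monomialSpan_span_X, ← monomialSpan_add, ← Set.image2_add, ← Set.image2_add,
    Set.image_image2_distrib (Finsupp.erase_add i)]

theorem IsBorelType.sup_monomialSpan (hA : IsBorelType (monomialSpan k A))
    (hB : IsBorelType (monomialSpan k B)) :
    IsBorelType (monomialSpan k A ⊔ monomialSpan k B) :=
  isBorelType_iff_le.2 fun i => by
    rw [infColon_sup_monomialSpan_span_X, ← hA i, ← hB i]
    exact sup_infColon_le _ _ _

theorem IsBorelType.mul_monomialSpan (hA : IsBorelType (monomialSpan k A))
    (hB : IsBorelType (monomialSpan k B)) :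
    IsBorelType (monomialSpan k A * monomialSpan k B) :=
  isBorelType_iff_le.2 fun i => by
    rw [infColon_mul_monomialSpan_span_X, ← hA i, ← hB i]
    exact mul_infColon_le _ _ _

end BorelType

/-- The intersection, sum and product of two Borel type monomial
ideals are again Borel type monomial ideals. -/
theorem borelType_inf_sup_mul
    {k : Type} [Field k] {n : ℕ} (K L : Ideal (MvPolynomial (Fin n) k))
    (hKm : IsMonomialIdeal K) (hKb : IsBorelType K)
    (hLm : IsMonomialIdeal L) (hLb : IsBorelType L) :
    (IsMonomialIdeal (K ⊓ L) ∧ IsBorelType (K ⊓ L)) ∧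
    (IsMonomialIdeal (K ⊔ L) ∧ IsBorelType (K ⊔ L)) ∧
    (IsMonomialIdeal (K * L) ∧ IsBorelType (K * L)) := by
  obtain ⟨A, rfl⟩ := hKm
  obtain ⟨B, rfl⟩ := hLm
  exact ⟨⟨⟨_, monomialSpan_inf A B⟩, hKb.inf hLb⟩,
    ⟨⟨_, (monomialSpan_union A B).symm⟩, hKb.sup_monomialSpan hLb⟩,
    ⟨⟨_, (monomialSpan_add A B).symm⟩, hKb.mul_monomialSpan hLb⟩⟩

end
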